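/- For every c ∈ [−1,1], the matrix M'(c) is congruent to D(c): there exists an invertible real 3×3 matrix S such that S · M'(c) · Sᵀ = D(c). -/
import Mathlib


open Matrix

/-- The matrix `M'(c)`: the leading principal 3×3 submatrix of 12h times the
interior interface quadratic-form matrix of the two-point-block BFD scheme. -/
noncomputable def Mpmat (c : ℝ) : Matrix (Fin 3) (Fin 3) ℝ :=
  !![8*c-19,      (71-40*c)/3,  8*c-5;
     (71-40*c)/3, (56*c-169)/3, (113-40*c)/3;
     8*c-5,       (113-40*c)/3, (56*c-169)/3]

/-- The diagonal matrix `D(c)` congruent to `M'(c)`. -/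
noncomputable def Dmat (c : ℝ) : Matrix (Fin 3) (Fin 3) ℝ :=
  Matrix.diagonal
    ![8*c - 19,
      -(16/9) * (8*c - 19) * (2*c*(8*c + 49) - 287),
      (16384/243) * (19 - 8*c)^4 * (2*c - 7) * (2*c*(2*c + 7) - 35) *
        (2*c*(8*c + 49) - 287)]

/-- The congruence matrix. -/
noncomputable def Smat (c : ℝ) : Matrix (Fin 3) (Fin 3) ℝ :=
  !![1, 0, 0;
     (40*c-71)/3, 8*c-19, 0;
     (8*c-19)*(-104272/9 + 10080*c - (8192/3)*c^2 + (2048/9)*c^3),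
     (8*c-19)*(-34048/3 + (31360/3)*c - (7168/3)*c^2),
     (8*c-19)*(-87248/9 + 7392*c - (2560/3)*c^2 - (2048/9)*c^3)]

/-- For every `c ∈ [-1,1]`, `M'(c)` is congruent to `D(c)`: there is an
invertible real 3×3 matrix `S` with `S · M'(c) · Sᵀ = D(c)`. -/
theorem Mpmat_congruent_Dmat (c : ℝ) (hc : c ∈ Set.Icc (-1 : ℝ) 1) :
    ∃ S : Matrix (Fin 3) (Fin 3) ℝ, IsUnit S ∧ S * Mpmat c * Sᵀ = Dmat c := by
  obtain ⟨hc1, hc2⟩ := hc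
  refine ⟨Smat c, ?_, ?_⟩
  · -- det (Smat c) ≠ 0
    rw [Matrix.isUnit_iff_isUnit_det, isUnit_iff_ne_zero]
    have hdet : (Smat c).det =
        (8*c-19)^2 * (-87248/9 + 7392*c - (2560/3)*c^2 - (2048/9)*c^3) := by
      simp [Smat, Matrix.det_fin_three]
      ring
    rw [hdet]
    have h1 : (8*c-19)^2 > 0 := by nlinarith
    have h2 : -87248/9 + 7392*c - (2560/3)*c^2 - (2048/9)*c^3 < 0 := by
      nlinarith [sq_nonneg c, sq_nonneg (c-1), sq_nonneg (c+1)]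
    intro h
    nlinarith [mul_pos h1 (neg_pos.mpr h2)]
  · have hT : (Smat c)ᵀ =
        !![1, (40*c-71)/3, (8*c-19)*(-104272/9 + 10080*c - (8192/3)*c^2 + (2048/9)*c^3);
           0, 8*c-19, (8*c-19)*(-34048/3 + (31360/3)*c - (7168/3)*c^2);
           0, 0, (8*c-19)*(-87248/9 + 7392*c - (2560/3)*c^2 - (2048/9)*c^3)] := by
      ext i j
      fin_cases i <;> fin_cases j <;> rfl
    rw [hT, Smat, Mpmat, Matrix.mul_fin_three, Matrix.mul_fin_three, Dmat]
    ext i j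
    fin_cases i <;> fin_cases j <;>
      simp [Matrix.diagonal] <;> ring
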